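/- In the Varchenko–Gelfand presentation for the braid arrangement A(S_n), the ideal I generated by e_{ij}² for all i < j and by e_{ij}e_{jk} − e_{ij}e_{ik} − e_{jk}e_{ik} for all i < j < k, has the property that the quotient ring ℝ[e_{ij}]/I has dimension n! as an ℝ-vector space, with basis given by products of one element from each of the sets {1, e_{12}}, {1, e_{13}, e_{23}}, ..., {1, e_{1n}, ..., e_{(n−1)n}}. -/

import Mathlib

open MvPolynomial

noncomputable section

/-- index set for the hyperplanes `H_{ij}`, `i < j`, of the braid arrangement -/
abbrev BraidIdx (n : ℕ) := {p : Fin n × Fin n // p.1 < p.2}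

/-- the variable `e_{ij}` attached to `i < j` given by `i : Fin j.val` -/
def braidVar {n : ℕ} (j : Fin n) (i : Fin j.val) : BraidIdx n :=
  ⟨(⟨i.val, lt_trans i.isLt j.isLt⟩, j), i.isLt⟩

/-- the Varchenko–Gelfand ideal of the braid arrangement `A(Sₙ)`:
generated by `e_{ij}²` and `e_{ij}e_{jk} − e_{ij}e_{ik} − e_{jk}e_{ik}` -/
def braidVGIdeal (n : ℕ) : Ideal (MvPolynomial (BraidIdx n) ℝ) :=
  Ideal.span
    ({q | ∃ p : BraidIdx n, q = X p ^ 2} ∪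
     {q | ∃ (i j k : Fin n) (hij : i < j) (hjk : j < k),
        q = X (⟨(i, j), hij⟩ : BraidIdx n) * X (⟨(j, k), hjk⟩ : BraidIdx n)
          - X (⟨(i, j), hij⟩ : BraidIdx n) * X (⟨(i, k), lt_trans hij hjk⟩ : BraidIdx n)
          - X (⟨(j, k), hjk⟩ : BraidIdx n) * X (⟨(i, k), lt_trans hij hjk⟩ : BraidIdx n)})

/-- the nbc-monomials: one factor (`1` or some `e_{ij}`) from each column `j` -/
def nbcFam (n : ℕ) : ((j : Fin n) → Option (Fin j.val)) →
    MvPolynomial (BraidIdx n) ℝ ⧸ braidVGIdeal n :=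
  fun f => Ideal.Quotient.mk (braidVGIdeal n)
    (∏ j : Fin n, (match f j with
      | none => 1
      | some i => X (braidVar j i)))

/-!
The rules `e_{ij}² = 0` and `e_{ik} e_{jk} = e_{ij} e_{jk} - e_{ij} e_{ik}` (`i < j < k`) rewrite
every monomial as a combination of nbc-monomials, so these span the quotient.

For independence, send `e_{ij}` to the indicator function `x_{ij}` of one side of `H_{ij}` on the
`n!` chambers. The `x_{ij}` satisfy the same relations up to lower-degree terms (`x² = x`,
`x_{ik} x_{jk} = x_{ij} x_{jk} - x_{ij} x_{ik} + x_{ik}`), so the same straightening shows that the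
images of the nbc-monomials span, hence form a basis of, the functions on chambers, compatibly
with the degree filtration. Recording degrees by a parameter `T`, every element of the ideal
becomes `T` times the image of a polynomial; comparing coefficients of `T^d` against the dual
basis, a relation among nbc-monomials modulo the ideal has all coefficients zero.
-/

theorem Equiv.Perm.ext_of_inversions {α : Type*} [LinearOrder α] [WellFoundedLT α]
    {w w' : Equiv.Perm α} (h : ∀ i j, i < j → (w j < w i ↔ w' j < w' i)) : w = w' := by
  have hmono : StrictMono (w' ∘ w.symm) := fun a b hab => by
    obtain ⟨i, rfl⟩ := w.surjective a
    obtain ⟨j, rfl⟩ := w.surjective b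
    simp only [Function.comp_apply, Equiv.symm_apply_apply]
    rcases lt_trichotomy i j with hij | rfl | hji
    · exact lt_of_le_of_ne (not_lt.mp fun h' => hab.not_gt ((h i j hij).mpr h'))
        (w'.injective.ne hij.ne)
    · exact absurd hab (lt_irrefl _)
    · exact (h j i hji).mp hab
  have hid := Subsingleton.elim
    (hmono.orderIsoOfSurjective _ (w'.surjective.comp w.symm.surjective)) (OrderIso.refl α)
  ext a
  simpa using (congrArg (fun e : α ≃o α => e (w a)) hid).symm

namespace BraidVG

abbrev Poly (n : ℕ) := MvPolynomial (BraidIdx n) ℝ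

abbrev NbcIndex (n : ℕ) := (j : Fin n) → Option (Fin j.val)

/-- The chambers of the braid arrangement are indexed by permutations. -/
abbrev ChamberFun (n : ℕ) := Equiv.Perm (Fin n) → ℝ

variable {n : ℕ}

section Monomials

def prodX (s : Multiset (BraidIdx n)) : Poly n := (s.map X).prod

@[simp] lemma prodX_cons (p : BraidIdx n) (s : Multiset (BraidIdx n)) :
    prodX (p ::ₘ s) = X p * prodX s := by
  simp [prodX]

lemma monomial_one_eq_prodX (σ : BraidIdx n →₀ ℕ) : monomial σ 1 = prodX σ.toMultiset := by
  rw [prodX, Finsupp.toMultiset_map, Finsupp.prod_toMultiset,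
    Finsupp.prod_mapDomain_index (fun _ => pow_zero _) (fun _ _ _ => pow_add _ _ _),
    monomial_eq, C_1, one_mul]

lemma mem_of_forall_prodX_mem {M : Type*} [AddCommGroup M] [Module ℝ M] (L : Poly n →ₗ[ℝ] M)
    {S : Submodule ℝ M} (h : ∀ s, L (prodX s) ∈ S) (e : Poly n) : L e ∈ S := by
  have hspan : Submodule.span ℝ (Set.range prodX) ≤ S.comap L :=
    Submodule.span_le.mpr fun _ ⟨s, hs⟩ => hs ▸ h s
  have hmono : Submodule.span ℝ (Set.range fun σ => monomial σ 1) ≤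
      Submodule.span ℝ (Set.range (prodX (n := n))) :=
    Submodule.span_mono fun _ ⟨σ, hσ⟩ => ⟨σ.toMultiset, hσ ▸ (monomial_one_eq_prodX σ).symm⟩
  rw [← coe_basisMonomials, (basisMonomials _ ℝ).span_eq] at hmono
  exact hspan (hmono Submodule.mem_top)

def nbcSupport (f : NbcIndex n) : Multiset (BraidIdx n) :=
  ∑ j : Fin n, match f j with
    | none => 0
    | some i => {braidVar j i}

lemma nbcFam_eq_mk_prodX (f : NbcIndex n) :
    nbcFam n f = Ideal.Quotient.mk (braidVGIdeal n) (prodX (nbcSupport f)) := by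
  rw [nbcFam, nbcSupport, prodX, ← Multiset.coe_mapAddMonoidHom, map_sum, Multiset.prod_sum]
  congr 1
  refine Finset.prod_congr rfl fun j _ => ?_
  cases f j <;> simp

lemma braidVar_injective (j : Fin n) : Function.Injective (braidVar j) := by
  intro i i' h
  exact Fin.ext (congrArg (fun p : BraidIdx n => p.1.1.val) h)

lemma count_nbcSupport [DecidableEq (BraidIdx n)] (f : NbcIndex n) (r : BraidIdx n) :
    (nbcSupport f).count r = if f r.1.2 = some ⟨r.1.1.val, r.2⟩ then 1 else 0 := by
  rw [nbcSupport, Multiset.count_sum', Finset.sum_eq_single r.1.2]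
  · rcases f r.1.2 with _ | i
    · simp
    · simp only [Multiset.count_singleton, Option.some.injEq]
      refine if_congr ⟨fun h => Fin.ext ?_, fun h => h ▸ rfl⟩ rfl rfl
      exact (congrArg (fun p : BraidIdx n => p.1.1.val) h).symm
  · intro j _ hj
    rcases f j with _ | i
    · simp
    · simp only [Multiset.count_singleton]
      exact if_neg fun h => hj (congrArg (fun p : BraidIdx n => p.1.2) h).symm
  · simp

lemma exists_nbcSupport_eq {s : Multiset (BraidIdx n)} (hs : s.Nodup)
    (htop : ∀ p ∈ s, ∀ q ∈ s, p.1.2 = q.1.2 → p = q) : ∃ f : NbcIndex n, nbcSupport f = s := by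
  classical
  let f : NbcIndex n := fun j => if h : ∃ i, braidVar j i ∈ s then some h.choose else none
  have hf : ∀ j i, f j = some i ↔ braidVar j i ∈ s := by
    intro j i
    by_cases h : ∃ i, braidVar j i ∈ s
    · simp only [f, dif_pos h, Option.some.injEq]
      exact ⟨fun e => e ▸ h.choose_spec,
        fun hi => braidVar_injective j (htop _ h.choose_spec _ hi rfl)⟩
    · simp only [f, dif_neg h, reduceCtorEq, false_iff]
      exact fun hi => h ⟨i, hi⟩
  refine ⟨f, Multiset.ext.mpr fun r => ?_⟩
  rw [count_nbcSupport, Multiset.count_eq_of_nodup hs]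
  exact if_congr (hf _ _) rfl rfl

lemma exists_cons_cons_or_nbcSupport (s : Multiset (BraidIdx n)) :
    (∃ p t, s = p ::ₘ p ::ₘ t) ∨
    (∃ (i j k : Fin n) (hij : i < j) (hjk : j < k) (t : Multiset (BraidIdx n)),
      s = ⟨(i, k), hij.trans hjk⟩ ::ₘ ⟨(j, k), hjk⟩ ::ₘ t) ∨
    ∃ f : NbcIndex n, nbcSupport f = s := by
  by_cases hs : s.Nodup
  · by_cases htop : ∀ p ∈ s, ∀ q ∈ s, p.1.2 = q.1.2 → p = q
    · exact Or.inr (Or.inr (exists_nbcSupport_eq hs htop))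
    push Not at htop
    obtain ⟨⟨⟨a, k⟩, hak⟩, hp, ⟨⟨b, k'⟩, hbk⟩, hq, hkk', hne⟩ := htop
    obtain rfl : k = k' := hkk'
    have hab : a ≠ b := fun h => hne (by subst h; rfl)
    refine Or.inr (Or.inl ?_)
    wlog hlt : a < b generalizing a b
    · exact this b hbk hq a hak hp hne.symm hab.symm (lt_of_le_of_ne (not_lt.mp hlt) hab.symm)
    obtain ⟨s', rfl⟩ := Multiset.exists_cons_of_mem hp
    obtain ⟨t, rfl⟩ :=
      Multiset.exists_cons_of_mem ((Multiset.mem_cons.mp hq).resolve_left hne.symm)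
    exact ⟨a, b, k, hlt, hbk, t, rfl⟩
  · rw [Multiset.nodup_iff_ne_cons_cons] at hs
    push Not at hs
    exact Or.inl hs

end Monomials

section Straightening

def topWeight (s : Multiset (BraidIdx n)) : ℕ := (s.map fun p => p.1.2.val + 1).sum

@[simp] lemma topWeight_cons (p : BraidIdx n) (s : Multiset (BraidIdx n)) :
    topWeight (p ::ₘ s) = p.1.2.val + 1 + topWeight s := by
  simp [topWeight]

/-- Straightening: dropping a repeated variable and rewriting
`e_{ik} e_{jk} ↦ e_{ij} e_{jk} - e_{ij} e_{ik}` (`i < j < k`) strictly lower `topWeight`, and the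
monomials to which neither applies are the nbc-monomials. -/
theorem nbc_induction {P : Multiset (BraidIdx n) → Prop}
    (nbc : ∀ f : NbcIndex n, P (nbcSupport f))
    (sq : ∀ p t, P (p ::ₘ t) → P (p ::ₘ p ::ₘ t))
    (mix : ∀ (i j k : Fin n) (hij : i < j) (hjk : j < k) (t : Multiset (BraidIdx n)),
      P (⟨(i, j), hij⟩ ::ₘ ⟨(j, k), hjk⟩ ::ₘ t) →
      P (⟨(i, j), hij⟩ ::ₘ ⟨(i, k), hij.trans hjk⟩ ::ₘ t) →
      P (⟨(i, k), hij.trans hjk⟩ ::ₘ t) →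
      P (⟨(i, k), hij.trans hjk⟩ ::ₘ ⟨(j, k), hjk⟩ ::ₘ t))
    (s : Multiset (BraidIdx n)) : P s := by
  induction hw : topWeight s using Nat.strong_induction_on generalizing s with
  | _ w ih =>
  subst hw
  rcases exists_cons_cons_or_nbcSupport s with
    ⟨p, t, rfl⟩ | ⟨i, j, k, hij, hjk, t, rfl⟩ | ⟨f, rfl⟩
  · exact sq p t (ih _ (by simp) _ rfl)
  · have hjk' : j.val < k.val := hjk
    exact mix i j k hij hjk t (ih _ (by simp; omega) _ rfl) (ih _ (by simp; omega) _ rfl)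
      (ih _ (by simp) _ rfl)
  · exact nbc f

end Straightening

section Quotient

local notation "π" => Ideal.Quotient.mk (braidVGIdeal n)

lemma mk_prodX_cons_cons_self (p : BraidIdx n) (t : Multiset (BraidIdx n)) :
    π (prodX (p ::ₘ p ::ₘ t)) = 0 := by
  rw [Ideal.Quotient.eq_zero_iff_mem, prodX_cons, prodX_cons, ← mul_assoc, ← sq]
  exact Ideal.mul_mem_right _ _ (Ideal.subset_span (Or.inl ⟨p, rfl⟩))

lemma mk_prodX_straighten {i j k : Fin n} (hij : i < j) (hjk : j < k)
    (t : Multiset (BraidIdx n)) :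
    π (prodX (⟨(i, k), hij.trans hjk⟩ ::ₘ ⟨(j, k), hjk⟩ ::ₘ t)) =
      π (prodX (⟨(i, j), hij⟩ ::ₘ ⟨(j, k), hjk⟩ ::ₘ t)) -
        π (prodX (⟨(i, j), hij⟩ ::ₘ ⟨(i, k), hij.trans hjk⟩ ::ₘ t)) := by
  rw [← sub_eq_zero, ← map_sub, ← map_sub, Ideal.Quotient.eq_zero_iff_mem]
  convert neg_mem (Ideal.mul_mem_right (prodX t) (braidVGIdeal n)
    (Ideal.subset_span (Or.inr ⟨i, j, k, hij, hjk, rfl⟩))) using 1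
  simp only [prodX_cons]
  ring

lemma mk_prodX_mem_span_nbcFam (s : Multiset (BraidIdx n)) :
    π (prodX s) ∈ Submodule.span ℝ (Set.range (nbcFam n)) := by
  induction s using nbc_induction with
  | nbc f => exact Submodule.subset_span ⟨f, nbcFam_eq_mk_prodX f⟩
  | sq p t _ => exact mk_prodX_cons_cons_self p t ▸ zero_mem _
  | mix i j k hij hjk t h₁ h₂ _ => exact mk_prodX_straighten hij hjk t ▸ sub_mem h₁ h₂

variable (n) in
theorem span_range_nbcFam : Submodule.span ℝ (Set.range (nbcFam n)) = ⊤ := by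
  refine eq_top_iff.mpr fun x _ => ?_
  obtain ⟨e, rfl⟩ := Ideal.Quotient.mk_surjective x
  exact mem_of_forall_prodX_mem (Ideal.Quotient.mkₐ ℝ (braidVGIdeal n)).toLinearMap
    mk_prodX_mem_span_nbcFam e

end Quotient

section Chambers

def heaviside (p : BraidIdx n) : ChamberFun n := fun w => if w p.1.2 < w p.1.1 then 1 else 0

def toChamberFun : Poly n →ₐ[ℝ] ChamberFun n := aeval heaviside

lemma heaviside_mul_self (p : BraidIdx n) : heaviside p * heaviside p = heaviside p := by
  funext w
  simp only [heaviside, Pi.mul_apply]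
  split_ifs <;> norm_num

lemma heaviside_straighten {i j k : Fin n} (hij : i < j) (hjk : j < k) :
    heaviside ⟨(i, k), hij.trans hjk⟩ * heaviside ⟨(j, k), hjk⟩ =
      heaviside ⟨(i, j), hij⟩ * heaviside ⟨(j, k), hjk⟩ -
        heaviside ⟨(i, j), hij⟩ * heaviside ⟨(i, k), hij.trans hjk⟩ +
        heaviside ⟨(i, k), hij.trans hjk⟩ := by
  funext w
  simp only [heaviside, Pi.mul_apply, Pi.sub_apply, Pi.add_apply]
  simp only [Fin.lt_def] at hij hjk ⊢
  split_ifs <;> first | omega | norm_num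

@[simp] lemma toChamberFun_X (p : BraidIdx n) : toChamberFun (X p) = heaviside p := aeval_X _ _

lemma toChamberFun_prodX_cons_cons_self (p : BraidIdx n) (t : Multiset (BraidIdx n)) :
    toChamberFun (prodX (p ::ₘ p ::ₘ t)) = toChamberFun (prodX (p ::ₘ t)) := by
  simp only [prodX_cons, map_mul, toChamberFun_X, ← mul_assoc, heaviside_mul_self]

lemma toChamberFun_prodX_straighten {i j k : Fin n} (hij : i < j) (hjk : j < k)
    (t : Multiset (BraidIdx n)) :
    toChamberFun (prodX (⟨(i, k), hij.trans hjk⟩ ::ₘ ⟨(j, k), hjk⟩ ::ₘ t)) =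
      toChamberFun (prodX (⟨(i, j), hij⟩ ::ₘ ⟨(j, k), hjk⟩ ::ₘ t)) -
        toChamberFun (prodX (⟨(i, j), hij⟩ ::ₘ ⟨(i, k), hij.trans hjk⟩ ::ₘ t)) +
        toChamberFun (prodX (⟨(i, k), hij.trans hjk⟩ ::ₘ t)) := by
  simp only [prodX_cons, map_mul, toChamberFun_X]
  linear_combination toChamberFun (prodX t) * heaviside_straighten hij hjk

def chamberNbc (f : NbcIndex n) : ChamberFun n := toChamberFun (prodX (nbcSupport f))

variable (n) in
def nbcFiltration (d : ℕ) : Submodule ℝ (ChamberFun n) :=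
  Submodule.span ℝ (chamberNbc '' {f | Multiset.card (nbcSupport f) ≤ d})

lemma nbcFiltration_mono : Monotone (nbcFiltration n) :=
  fun _ _ h => Submodule.span_mono (Set.image_mono fun _ hf => le_trans hf h)

lemma toChamberFun_prodX_mem_nbcFiltration (s : Multiset (BraidIdx n)) :
    toChamberFun (prodX s) ∈ nbcFiltration n (Multiset.card s) := by
  induction s using nbc_induction with
  | nbc f => exact Submodule.subset_span (Set.mem_image_of_mem _ (Set.mem_ofPred.mpr le_rfl))
  | sq p t h =>
    rw [toChamberFun_prodX_cons_cons_self]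
    exact nbcFiltration_mono (by simp) h
  | mix i j k hij hjk t h₁ h₂ h₃ =>
    simp only [Multiset.card_cons] at h₁ h₂ h₃ ⊢
    rw [toChamberFun_prodX_straighten hij hjk]
    exact add_mem (sub_mem h₁ h₂) (nbcFiltration_mono (by simp) h₃)

def chamberIndicatorPoly (w : Equiv.Perm (Fin n)) : Poly n :=
  ∏ p : BraidIdx n, if w p.1.2 < w p.1.1 then X p else 1 - X p

lemma toChamberFun_chamberIndicatorPoly (w : Equiv.Perm (Fin n)) :
    toChamberFun (chamberIndicatorPoly w) = Pi.single w 1 := by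
  classical
  funext w'
  have hfactor : ∀ p : BraidIdx n,
      toChamberFun (if w p.1.2 < w p.1.1 then X p else 1 - X p) w' =
        if (w p.1.2 < w p.1.1 ↔ w' p.1.2 < w' p.1.1) then 1 else 0 := by
    intro p
    by_cases hw : w p.1.2 < w p.1.1 <;> by_cases hw' : w' p.1.2 < w' p.1.1 <;>
      simp [hw, hw', heaviside]
  rw [chamberIndicatorPoly, map_prod, Finset.prod_apply]
  simp only [hfactor, Fintype.prod_boole, Pi.single_apply]
  refine if_congr ⟨fun h => (Equiv.Perm.ext_of_inversions fun i j hij => h ⟨(i, j), hij⟩).symm,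
    fun h _ => h ▸ Iff.rfl⟩ rfl rfl

variable (n) in
lemma span_range_chamberNbc : Submodule.span ℝ (Set.range (chamberNbc (n := n))) = ⊤ := by
  have hmem : ∀ e : Poly n, toChamberFun e ∈ Submodule.span ℝ (Set.range chamberNbc) :=
    mem_of_forall_prodX_mem toChamberFun.toLinearMap fun s =>
      Submodule.span_mono (Set.image_subset_range _ _) (toChamberFun_prodX_mem_nbcFiltration s)
  rw [eq_top_iff, ← (Pi.basisFun ℝ (Equiv.Perm (Fin n))).span_eq, Submodule.span_le]
  rintro _ ⟨w, rfl⟩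
  rw [Pi.basisFun_apply, ← toChamberFun_chamberIndicatorPoly]
  exact hmem _

variable (n) in
lemma card_nbcIndex : Fintype.card (NbcIndex n) = n.factorial := by
  simp [Fintype.card_pi, Fin.prod_univ_eq_prod_range (fun i => i + 1),
    Finset.prod_range_add_one_eq_factorial]

variable (n) in
def chamberNbcBasis : Module.Basis (NbcIndex n) ℝ (ChamberFun n) :=
  basisOfTopLeSpanOfCardEqFinrank chamberNbc (span_range_chamberNbc n).ge (by
    rw [card_nbcIndex, Module.finrank_fintype_fun_eq_card, Fintype.card_perm, Fintype.card_fin])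

lemma chamberNbcBasis_apply (f : NbcIndex n) : chamberNbcBasis n f = chamberNbc f := by
  rw [chamberNbcBasis, coe_basisOfTopLeSpanOfCardEqFinrank]

lemma coord_chamberNbc (f f₀ : NbcIndex n) :
    (chamberNbcBasis n).coord f₀ (chamberNbc f) = if f = f₀ then 1 else 0 := by
  rw [← chamberNbcBasis_apply, Module.Basis.coord_apply, Module.Basis.repr_self,
    Finsupp.single_apply, eq_comm]

lemma nbcFiltration_le_ker_coord {f₀ : NbcIndex n} {m : ℕ}
    (hm : m < Multiset.card (nbcSupport f₀)) :
    nbcFiltration n m ≤ LinearMap.ker ((chamberNbcBasis n).coord f₀) := by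
  rw [nbcFiltration, Submodule.span_le]
  rintro _ ⟨f, hf, rfl⟩
  have hne : f ≠ f₀ := by
    rintro rfl
    exact absurd hf hm.not_ge
  rw [SetLike.mem_coe, LinearMap.mem_ker, coord_chamberNbc, if_neg hne]

end Chambers

section Rees

/-- Records the degree of a polynomial in the formal parameter `T`. -/
def reesEval : Poly n →ₐ[ℝ] Polynomial (ChamberFun n) :=
  aeval fun p => Polynomial.C (heaviside p) * Polynomial.X

lemma reesEval_X (p : BraidIdx n) : reesEval (X p) = Polynomial.C (heaviside p) * Polynomial.X :=
  aeval_X _ _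

lemma reesEval_prodX (s : Multiset (BraidIdx n)) :
    reesEval (prodX s) =
      Polynomial.C (toChamberFun (prodX s)) * Polynomial.X ^ Multiset.card s := by
  induction s using Multiset.induction with
  | empty => simp [prodX]
  | cons p t ih =>
    simp only [prodX_cons, map_mul, ih, reesEval_X, toChamberFun_X, Multiset.card_cons]
    ring

lemma coeff_reesEval_mem_nbcFiltration (e : Poly n) (d : ℕ) :
    (reesEval e).coeff d ∈ nbcFiltration n d := by
  refine mem_of_forall_prodX_mem
    ((Polynomial.lcoeff (ChamberFun n) d).restrictScalars ℝ ∘ₗ reesEval.toLinearMap)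
    (fun s => ?_) e
  simp only [LinearMap.coe_comp, Function.comp_apply, AlgHom.toLinearMap_apply,
    LinearMap.coe_restrictScalars, Polynomial.lcoeff_apply, reesEval_prodX,
    Polynomial.coeff_C_mul_X_pow]
  split_ifs with hd
  · exact hd ▸ toChamberFun_prodX_mem_nbcFiltration s
  · exact zero_mem _

/-- Every generator of the ideal becomes divisible by `T`, because `x_{ij}` satisfies the
relations of the ideal up to terms of lower degree. -/
lemma exists_reesEval_eq_X_mul {q : Poly n} (hq : q ∈ braidVGIdeal n) :
    ∃ e, reesEval q = Polynomial.X * reesEval e := by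
  refine Submodule.span_induction ?_ ⟨0, by simp⟩ ?_ ?_ hq
  · rintro _ (⟨p, rfl⟩ | ⟨i, j, k, hij, hjk, rfl⟩)
    · refine ⟨X p, ?_⟩
      rw [map_pow, reesEval_X, mul_pow, ← map_pow, sq (heaviside p), heaviside_mul_self]
      ring
    · refine ⟨-X ⟨(i, k), hij.trans hjk⟩, ?_⟩
      have h := congrArg Polynomial.C (heaviside_straighten hij hjk)
      simp only [map_sub, map_add, map_mul, map_neg, reesEval_X] at h ⊢
      linear_combination -Polynomial.X ^ 2 * h
  · rintro x y - - ⟨ex, hx⟩ ⟨ey, hy⟩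
    exact ⟨ex + ey, by rw [map_add, hx, hy, map_add, mul_add]⟩
  · rintro a x - ⟨ex, hx⟩
    exact ⟨a * ex, by rw [smul_eq_mul, map_mul, hx, map_mul]; ring⟩

lemma coord_coeff_reesEval_nbc (f f₀ : NbcIndex n) :
    (chamberNbcBasis n).coord f₀
        ((reesEval (prodX (nbcSupport f))).coeff (Multiset.card (nbcSupport f₀))) =
      if f = f₀ then 1 else 0 := by
  rw [reesEval_prodX, Polynomial.coeff_C_mul_X_pow]
  split_ifs with hd hf hf
  · exact coord_chamberNbc f f₀ ▸ if_pos hf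
  · exact coord_chamberNbc f f₀ ▸ if_neg hf
  · exact absurd (hf ▸ rfl) hd
  · exact map_zero _

end Rees

variable (n) in
theorem linearIndependent_nbcFam : LinearIndependent ℝ (nbcFam n) := by
  rw [Fintype.linearIndependent_iff]
  intro g hg f₀
  set q := ∑ f, g f • prodX (nbcSupport f)
  have hq : q ∈ braidVGIdeal n := by
    rw [← Ideal.Quotient.eq_zero_iff_mem, ← hg, ← Ideal.Quotient.mkₐ_eq_mk ℝ, map_sum]
    simp [nbcFam_eq_mk_prodX]
  obtain ⟨e, he⟩ := exists_reesEval_eq_X_mul hq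
  let φ := (chamberNbcBasis n).coord f₀
  have hφq : φ ((reesEval q).coeff (Multiset.card (nbcSupport f₀))) = g f₀ := by
    simp only [q, φ, map_sum, Polynomial.finsetSum_coeff, map_smul, Polynomial.coeff_smul,
      coord_coeff_reesEval_nbc, smul_eq_mul, mul_ite, mul_one, mul_zero, Finset.sum_ite_eq',
      Finset.mem_univ, if_true]
  have hφXe : φ ((Polynomial.X * reesEval e).coeff (Multiset.card (nbcSupport f₀))) = 0 := by
    rcases Nat.eq_zero_or_eq_succ_pred (Multiset.card (nbcSupport f₀)) with h0 | hsucc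
    · rw [h0, Polynomial.coeff_X_mul_zero, map_zero]
    · rw [hsucc, Polynomial.coeff_X_mul]
      exact nbcFiltration_le_ker_coord (by omega) (coeff_reesEval_mem_nbcFiltration e _)
  rw [← hφq, he, hφXe]

end BraidVG

/-- The associated graded Varchenko–Gelfand ring of the braid arrangement
`A(Sₙ)` has dimension `n!` over `ℝ`, with basis the nbc-monomials obtained by
taking one element from each of the sets
`{1, e_{12}}, {1, e_{13}, e_{23}}, …, {1, e_{1n}, …, e_{(n−1)n}}`. -/
theorem braid_vg_basis (n : ℕ) :
    LinearIndependent ℝ (nbcFam n) ∧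
    Submodule.span ℝ (Set.range (nbcFam n)) = ⊤ ∧
    Module.finrank ℝ (MvPolynomial (BraidIdx n) ℝ ⧸ braidVGIdeal n) = n.factorial := by
  have hli := BraidVG.linearIndependent_nbcFam n
  have hspan := BraidVG.span_range_nbcFam n
  refine ⟨hli, hspan, ?_⟩
  rw [Module.finrank_eq_card_basis (Module.Basis.mk hli hspan.ge), BraidVG.card_nbcIndex]

end
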